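/- arXiv:1107.2960 — 6 statements merged into one kernel-verified Lean document; each statement's English description precedes it below -/
import Mathlib

section
/- Let n ≥ 1, let ℏ > 0, t > 0, and x, y ∈ ℝⁿ, and set s = (1/ℏ)·(1 − e^{−tℏ})/(1 + e^{−tℏ}). Then the rescaled Mehler expression equals its reparametrized form: π^{−n/2} (1 − e^{−2ℏt})^{−n/2} · exp( −[ ((|x|² + |y|²)/2)(1 + e^{−2ℏt}) − 2 e^{−tℏ} x·y ] / (ℏ(1 − e^{−2ℏt})) ) = (4πℏ)^{−n/2} s^{−n/2} (1 + sℏ)^n · exp( −|x − y|²/(4ℏ²s) − s|x + y|²/4 ). -/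
/-!
With `q = e^{-tℏ}` one has `e^{-2ℏt} = q²` and `sℏ = (1 - q)/(1 + q)`, so `1 + sℏ = 2/(1 + q)` and
`4πℏs/(1 + sℏ)² = π(1 - q²)`: this matches the prefactors. For the exponents, expand
`|x ∓ y|² = |x|² + |y|² ∓ 2 x·y`; both sides are then the same rational function of `q`.
-/

open Real

theorem rpow_neg_div_two_mul_pow {a b : ℝ} (ha : 0 ≤ a) (hb : 0 < b) (n : ℕ) :
    a ^ (-(n : ℝ) / 2) * b ^ n = (a / b ^ 2) ^ (-(n : ℝ) / 2) := by
  have hb2 : (b ^ 2) ^ (-(n : ℝ) / 2) = (b ^ n)⁻¹ := by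
    rw [← rpow_natCast b 2, ← rpow_mul hb.le, ← rpow_natCast, ← rpow_neg hb.le]
    congr 1
    push_cast
    ring
  rw [div_rpow ha (by positivity), hb2, div_inv_eq_mul]

section MehlerTime

variable {ℏ q s : ℝ}

theorem four_mul_mul_div_one_add_mul_sq (hℏ : ℏ ≠ 0) (hq : 1 + q ≠ 0)
    (hs : s = (1 / ℏ) * ((1 - q) / (1 + q))) (c : ℝ) :
    4 * c * ℏ * s / (1 + s * ℏ) ^ 2 = c * (1 - q ^ 2) := by
  subst hs
  field_simp
  ring

theorem mehler_exponent_eq {E : Type*} [NormedAddCommGroup E] [InnerProductSpace ℝ E]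
    (hℏ : ℏ ≠ 0) (hq : 1 + q ≠ 0) (hq' : 1 - q ≠ 0)
    (hs : s = (1 / ℏ) * ((1 - q) / (1 + q))) (x y : E) :
    -(((‖x‖ ^ 2 + ‖y‖ ^ 2) / 2) * (1 + q ^ 2) - 2 * q * (inner ℝ x y : ℝ)) / (ℏ * (1 - q ^ 2))
      = -(‖x - y‖ ^ 2) / (4 * ℏ ^ 2 * s) - s * ‖x + y‖ ^ 2 / 4 := by
  have h1q : (1 : ℝ) - q ^ 2 = (1 - q) * (1 + q) := by ring
  rw [norm_sub_sq_real, norm_add_sq_real, h1q, hs]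
  field_simp
  ring

end MehlerTime

theorem mehler_reparametrization_general
    (n : ℕ) (ℏ t : ℝ) (hℏ : 0 < ℏ) (ht : 0 < t)
    (x y : EuclideanSpace ℝ (Fin n))
    (s : ℝ) (hs : s = (1 / ℏ) * ((1 - Real.exp (-(t * ℏ))) / (1 + Real.exp (-(t * ℏ))))) :
    Real.pi ^ (-(n : ℝ) / 2) * (1 - Real.exp (-(2 * ℏ * t))) ^ (-(n : ℝ) / 2) *
      Real.exp (-(((‖x‖ ^ 2 + ‖y‖ ^ 2) / 2) * (1 + Real.exp (-(2 * ℏ * t)))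
          - 2 * Real.exp (-(t * ℏ)) * (inner ℝ x y : ℝ)) / (ℏ * (1 - Real.exp (-(2 * ℏ * t)))))
    = (4 * Real.pi * ℏ) ^ (-(n : ℝ) / 2) * s ^ (-(n : ℝ) / 2) * (1 + s * ℏ) ^ n *
      Real.exp (-(‖x - y‖ ^ 2) / (4 * ℏ ^ 2 * s) - s * ‖x + y‖ ^ 2 / 4) := by
  set q := Real.exp (-(t * ℏ))
  have hq_pos : 0 < q := exp_pos _
  have hq_lt : q < 1 := exp_lt_one_iff.mpr (by nlinarith)
  have hq_sq : Real.exp (-(2 * ℏ * t)) = q ^ 2 := by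
    rw [← exp_nat_mul]
    ring_nf
  have hs_pos : 0 < s := by
    rw [hs]
    exact mul_pos (by positivity) (div_pos (by linarith) (by linarith))
  have hprefactor : (4 * π * ℏ) ^ (-(n : ℝ) / 2) * s ^ (-(n : ℝ) / 2) * (1 + s * ℏ) ^ n
      = π ^ (-(n : ℝ) / 2) * (1 - q ^ 2) ^ (-(n : ℝ) / 2) := by
    rw [← mul_rpow (by positivity) hs_pos.le, rpow_neg_div_two_mul_pow (by positivity)
      (by positivity), four_mul_mul_div_one_add_mul_sq hℏ.ne' (by linarith) hs,
      mul_rpow pi_pos.le (by nlinarith)]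
  rw [hq_sq, mehler_exponent_eq hℏ.ne' (by linarith) (by linarith) hs, hprefactor]

theorem mehler_reparametrization
    (n : ℕ) (hn : 1 ≤ n) (ℏ t : ℝ) (hℏ : 0 < ℏ) (ht : 0 < t)
    (x y : EuclideanSpace ℝ (Fin n))
    (s : ℝ) (hs : s = (1 / ℏ) * ((1 - Real.exp (-(t * ℏ))) / (1 + Real.exp (-(t * ℏ))))) :
    Real.pi ^ (-(n : ℝ) / 2) * (1 - Real.exp (-(2 * ℏ * t))) ^ (-(n : ℝ) / 2) *
      Real.exp (-(((‖x‖ ^ 2 + ‖y‖ ^ 2) / 2) * (1 + Real.exp (-(2 * ℏ * t)))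
          - 2 * Real.exp (-(t * ℏ)) * (inner ℝ x y : ℝ)) / (ℏ * (1 - Real.exp (-(2 * ℏ * t)))))
    = (4 * Real.pi * ℏ) ^ (-(n : ℝ) / 2) * s ^ (-(n : ℝ) / 2) * (1 + s * ℏ) ^ n *
      Real.exp (-(‖x - y‖ ^ 2) / (4 * ℏ ^ 2 * s) - s * ‖x + y‖ ^ 2 / 4) :=
  mehler_reparametrization_general n ℏ t hℏ ht x y s hs
end

section
/- Let n ≥ 1 and let K : (0,∞) × ℝⁿ × ℝⁿ → ℝ be the Mehler kernel K(t,x,y) = π^{−n/2}(1 − e^{−2t})^{−n/2} · exp( −[ ((|x|² + |y|²)/2)(1 + e^{−2t}) − 2 e^{−t} x·y ] / (1 − e^{−2t}) ). Then for every t > 0 and x, y ∈ ℝⁿ, ∂K/∂t (t,x,y) = −(1/2) Σ_{i=1}^n ( −∂²K/∂x_i² (t,x,y) + (x_i² − 1)·K(t,x,y) ); i.e., K solves the heat equation ∂_t K = −L_x K for the harmonic oscillator L = (1/2) Σ_i (−∂²/∂x_i² + x_i² − 1). -/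
/-!
With `s = e^{-t}`, the logarithm of the Mehler kernel is a quadratic polynomial in each
coordinate `xᵢ`, so `∂²K/∂xᵢ² = K ((∂ᵢ log K)² + ∂ᵢ² log K)`, while `∂ₜ K = K ∂ₜ log K`.
Both sides of the heat equation are therefore `K` times an explicit rational function of `s`,
quadratic in `x` and `y`, and a direct computation shows that the two agree.
-/

open Real

/-- The Mehler kernel of the harmonic oscillator
`L = (1/2) ∑ i (-∂²/∂xᵢ² + xᵢ² - 1)` on `ℝⁿ`. -/
noncomputable def mehlerKernel (n : ℕ) (t : ℝ) (x y : Fin n → ℝ) : ℝ :=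
  Real.pi ^ (-(n : ℝ) / 2) * (1 - Real.exp (-(2 * t))) ^ (-(n : ℝ) / 2) *
    Real.exp (-((((∑ i, x i ^ 2) + ∑ i, y i ^ 2) / 2) * (1 + Real.exp (-(2 * t)))
        - 2 * Real.exp (-t) * ∑ i, x i * y i) / (1 - Real.exp (-(2 * t))))

theorem Finset.sum_apply_update {ι α M : Type*} [Fintype ι] [DecidableEq ι] [AddCommGroup M]
    (f : ι → α → M) (x : ι → α) (i : ι) (u : α) :
    ∑ j, f j (Function.update x i u j) = ∑ j, f j (x j) + (f i u - f i (x i)) := by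
  simp only [Function.apply_update f x i u, sum_update_of_mem (mem_univ i),
    sum_eq_add_sum_sdiff_singleton_of_mem (mem_univ i) (fun j => f j (x j))]
  abel

theorem hasDerivAt_exp_quadratic (a b d u : ℝ) :
    HasDerivAt (fun u => exp (a * u ^ 2 + b * u + d))
      (exp (a * u ^ 2 + b * u + d) * (2 * a * u + b)) u := by
  have hq : HasDerivAt (fun u => a * u ^ 2 + b * u + d) (2 * a * u + b) u := by
    refine ((((hasDerivAt_pow 2 u).const_mul a).add
      ((hasDerivAt_id' u).const_mul b)).add_const d).congr_deriv ?_
    ring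
  exact hq.exp

theorem iteratedDeriv_two_exp_quadratic (a b d v : ℝ) :
    iteratedDeriv 2 (fun u => exp (a * u ^ 2 + b * u + d)) v
      = exp (a * v ^ 2 + b * v + d) * ((2 * a * v + b) ^ 2 + 2 * a) := by
  have hderiv : deriv (fun u => exp (a * u ^ 2 + b * u + d))
      = fun u => exp (a * u ^ 2 + b * u + d) * (2 * a * u + b) :=
    funext fun u => (hasDerivAt_exp_quadratic a b d u).deriv
  rw [iteratedDeriv_succ, iteratedDeriv_one, hderiv]
  refine (((hasDerivAt_exp_quadratic a b d v).mul
    (((hasDerivAt_id' v).const_mul (2 * a)).add_const b)).congr_deriv ?_).deriv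
  ring

theorem Real.exp_neg_two_mul (t : ℝ) : exp (-(2 * t)) = exp (-t) ^ 2 := by
  rw [← exp_nat_mul]; ring_nf

theorem Real.one_sub_exp_neg_sq_ne_zero {t : ℝ} (ht : t ≠ 0) : 1 - exp (-t) ^ 2 ≠ 0 := by
  rw [← exp_neg_two_mul, sub_ne_zero, ne_comm, Ne, exp_eq_one_iff]
  simpa using ht

/-- The Mehler kernel in the variable `s = e^{-t}`, with `A = |x|² + |y|²` and `B = x ⬝ y`. -/
noncomputable def mehlerProfile (n : ℕ) (A B s : ℝ) : ℝ :=
  π ^ (-(n : ℝ) / 2) * (1 - s ^ 2) ^ (-(n : ℝ) / 2) *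
    exp (-(A / 2 * (1 + s ^ 2) - 2 * s * B) / (1 - s ^ 2))

/-- `∂ₜ log K` at `s = e^{-t}`, with `A` and `B` as in `mehlerProfile`. -/
noncomputable def mehlerRate (n : ℕ) (A B s : ℝ) : ℝ :=
  2 * s * (s * A - (1 + s ^ 2) * B) / (1 - s ^ 2) ^ 2 - n * s ^ 2 / (1 - s ^ 2)

theorem mehlerKernel_eq_mehlerProfile (n : ℕ) (t : ℝ) (x y : Fin n → ℝ) :
    mehlerKernel n t x y
      = mehlerProfile n (∑ i, x i ^ 2 + ∑ i, y i ^ 2) (∑ i, x i * y i) (exp (-t)) := by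
  rw [mehlerKernel, mehlerProfile, exp_neg_two_mul]

theorem hasDerivAt_mehlerProfile (n : ℕ) (A B : ℝ) {s : ℝ} (hs : 1 - s ^ 2 ≠ 0) :
    HasDerivAt (mehlerProfile n A B)
      (mehlerProfile n A B s *
        (n * s / (1 - s ^ 2) - 2 * (A * s - (1 + s ^ 2) * B) / (1 - s ^ 2) ^ 2)) s := by
  have hD : HasDerivAt (fun s : ℝ => 1 - s ^ 2) (-(2 * s)) s := by
    simpa using (hasDerivAt_pow 2 s).const_sub 1
  have hN : HasDerivAt (fun s : ℝ => A / 2 * (1 + s ^ 2) - 2 * s * B) (A * s - 2 * B) s := by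
    refine ((((hasDerivAt_pow 2 s).const_add 1).const_mul (A / 2)).sub
      (((hasDerivAt_id' s).const_mul 2).mul_const B)).congr_deriv ?_
    ring
  have h := ((hD.rpow_const (p := -(n : ℝ) / 2) (Or.inl hs)).const_mul (π ^ (-(n : ℝ) / 2))).mul
    (hN.neg.div hD hs).exp
  refine h.congr_deriv ?_
  simp only [Pi.neg_apply, Pi.div_apply, rpow_sub_one hs, mehlerProfile]
  field_simp
  ring

theorem hasDerivAt_mehlerKernel_time (n : ℕ) {t : ℝ} (ht : t ≠ 0) (x y : Fin n → ℝ) :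
    HasDerivAt (fun τ => mehlerKernel n τ x y)
      (mehlerKernel n t x y *
        mehlerRate n (∑ i, x i ^ 2 + ∑ i, y i ^ 2) (∑ i, x i * y i) (exp (-t))) t := by
  simp only [mehlerKernel_eq_mehlerProfile]
  refine ((hasDerivAt_mehlerProfile n _ _ (one_sub_exp_neg_sq_ne_zero ht)).comp t
    (hasDerivAt_neg t).exp).congr_deriv ?_
  rw [mehlerRate]
  field_simp
  ring

theorem mehlerKernel_update (n : ℕ) (t : ℝ) (x y : Fin n → ℝ) (i : Fin n) (u : ℝ) :
    mehlerKernel n t (Function.update x i u) y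
      = mehlerKernel n t x y *
          exp ((2 * exp (-t) * y i * (u - x i) - (1 + exp (-t) ^ 2) * (u ^ 2 - x i ^ 2) / 2)
            / (1 - exp (-t) ^ 2)) := by
  simp only [mehlerKernel_eq_mehlerProfile, mehlerProfile, mul_assoc, ← exp_add,
    Finset.sum_apply_update (fun _ v => v ^ 2), Finset.sum_apply_update (fun j v => v * y j)]
  congr 3
  ring

theorem iteratedDeriv_two_mehlerKernel_update (n : ℕ) (t : ℝ) (x y : Fin n → ℝ) (i : Fin n) :
    iteratedDeriv 2 (fun u => mehlerKernel n t (Function.update x i u) y) (x i)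
      = mehlerKernel n t x y *
          (((2 * exp (-t) * y i - (1 + exp (-t) ^ 2) * x i) / (1 - exp (-t) ^ 2)) ^ 2
            - (1 + exp (-t) ^ 2) / (1 - exp (-t) ^ 2)) := by
  set s := exp (-t)
  set a := -(1 + s ^ 2) / 2 / (1 - s ^ 2)
  set b := 2 * s * y i / (1 - s ^ 2)
  have hslice : (fun u => mehlerKernel n t (Function.update x i u) y)
      = fun u => mehlerKernel n t x y * exp (a * u ^ 2 + b * u + -(a * x i ^ 2 + b * x i)) := by
    funext u
    rw [mehlerKernel_update]
    congr 2
    ring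
  rw [hslice, iteratedDeriv_const_mul_field, iteratedDeriv_two_exp_quadratic, add_neg_cancel,
    exp_zero, one_mul]
  ring

theorem mehlerRate_eq_sum (n : ℕ) {s : ℝ} (hs : 1 - s ^ 2 ≠ 0) (x y : Fin n → ℝ) :
    mehlerRate n (∑ i, x i ^ 2 + ∑ i, y i ^ 2) (∑ i, x i * y i) s
      = ∑ i, ((((2 * s * y i - (1 + s ^ 2) * x i) / (1 - s ^ 2)) ^ 2
          - (1 + s ^ 2) / (1 - s ^ 2)) - (x i ^ 2 - 1)) / 2 := by
  -- the `x i ^ 2` and constant terms collapse through `(1 + s²)² - (1 - s²)² = 4 s²`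
  have hterm : ∀ i, ((((2 * s * y i - (1 + s ^ 2) * x i) / (1 - s ^ 2)) ^ 2
        - (1 + s ^ 2) / (1 - s ^ 2)) - (x i ^ 2 - 1)) / 2
      = 2 * s ^ 2 / (1 - s ^ 2) ^ 2 * (x i ^ 2 + y i ^ 2)
        - 2 * s * (1 + s ^ 2) / (1 - s ^ 2) ^ 2 * (x i * y i) - s ^ 2 / (1 - s ^ 2) := by
    intro i
    field_simp
    ring
  simp only [hterm, Finset.sum_sub_distrib, ← Finset.mul_sum, Finset.sum_add_distrib,
    Finset.sum_const, Finset.card_univ, Fintype.card_fin, nsmul_eq_mul, mehlerRate]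
  ring

theorem mehlerKernel_heat_equation_general (n : ℕ)
    (t : ℝ) (ht : 0 < t) (x y : Fin n → ℝ) :
    deriv (fun τ => mehlerKernel n τ x y) t
      = -(1 / 2) * ∑ i,
          (-(iteratedDeriv 2 (fun u => mehlerKernel n t (Function.update x i u) y) (x i))
            + (x i ^ 2 - 1) * mehlerKernel n t x y) := by
  rw [(hasDerivAt_mehlerKernel_time n ht.ne' x y).deriv,
    mehlerRate_eq_sum n (one_sub_exp_neg_sq_ne_zero ht.ne') x y, Finset.mul_sum, Finset.mul_sum]
  refine Finset.sum_congr rfl fun i _ => ?_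
  rw [iteratedDeriv_two_mehlerKernel_update]
  ring

theorem mehlerKernel_heat_equation (n : ℕ) (hn : 1 ≤ n)
    (t : ℝ) (ht : 0 < t) (x y : Fin n → ℝ) :
    deriv (fun τ => mehlerKernel n τ x y) t
      = -(1 / 2) * ∑ i,
          (-(iteratedDeriv 2 (fun u => mehlerKernel n t (Function.update x i u) y) (x i))
            + (x i ^ 2 - 1) * mehlerKernel n t x y) :=
  mehlerKernel_heat_equation_general n t ht x y
end

section
/- Let n ≥ 1 and let K : (0,∞) × ℝⁿ × ℝⁿ → ℝ be the Mehler kernel K(t,x,y) = π^{−n/2}(1 − e^{−2t})^{−n/2} · exp( −[ ((|x|² + |y|²)/2)(1 + e^{−2t}) − 2 e^{−t} x·y ] / (1 − e^{−2t}) ). Then K satisfies the semigroup (Chapman–Kolmogorov) property: for all t, t' > 0 and x, y ∈ ℝⁿ, ∫_{ℝⁿ} K(t,x,z) K(t',z,y) dz = K(t + t', x, y). -/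
open Real MeasureTheory

theorem integral_exp_neg_mul_sq_add_mul_add {a : ℝ} (ha : 0 < a) (b c : ℝ) :
    ∫ z : ℝ, exp (-a * z ^ 2 + b * z - c) = √(π / a) * exp (b ^ 2 / (4 * a) - c) := by
  have hsq (z : ℝ) :
      -a * z ^ 2 + b * z - c = -a * (z - b / (2 * a)) ^ 2 + (b ^ 2 / (4 * a) - c) := by
    field_simp
    ring
  simp_rw [hsq, exp_add, integral_mul_const, integral_sub_right_eq_self (fun z => exp (-a * z ^ 2)),
    integral_gaussian]

/-- The one-dimensional Mehler kernel, parametrised by `s = exp (-t)` so that adding times becomes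
multiplying parameters. -/
noncomputable def mehlerFactor (s a b : ℝ) : ℝ :=
  (√(π * (1 - s ^ 2)))⁻¹ *
    exp (-((a ^ 2 + b ^ 2) / 2 * (1 + s ^ 2) - 2 * s * (a * b)) / (1 - s ^ 2))

theorem mehlerFactor_mul_mehlerFactor {s s' : ℝ} (hs : s ^ 2 ≠ 1) (hs' : s' ^ 2 ≠ 1)
    (a b z : ℝ) :
    mehlerFactor s a z * mehlerFactor s' z b =
      (√(π * (1 - s ^ 2)))⁻¹ * (√(π * (1 - s' ^ 2)))⁻¹ *
        exp (-((1 + s ^ 2) / (2 * (1 - s ^ 2)) + (1 + s' ^ 2) / (2 * (1 - s' ^ 2))) * z ^ 2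
          + 2 * (s * a / (1 - s ^ 2) + s' * b / (1 - s' ^ 2)) * z
          - (a ^ 2 * (1 + s ^ 2) / (2 * (1 - s ^ 2))
            + b ^ 2 * (1 + s' ^ 2) / (2 * (1 - s' ^ 2)))) := by
  have h : 1 - s ^ 2 ≠ 0 := sub_ne_zero.2 hs.symm
  have h' : 1 - s' ^ 2 ≠ 0 := sub_ne_zero.2 hs'.symm
  rw [mehlerFactor, mehlerFactor, mul_mul_mul_comm, ← exp_add]
  congr 2
  field_simp
  ring

theorem mehlerFactor_semigroup {s s' : ℝ} (hs : s ^ 2 < 1) (hs' : s' ^ 2 < 1) (a b : ℝ) :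
    ∫ z : ℝ, mehlerFactor s a z * mehlerFactor s' z b = mehlerFactor (s * s') a b := by
  have h : 0 < 1 - s ^ 2 := by linarith
  have h' : 0 < 1 - s' ^ 2 := by linarith
  have hss' : 0 < 1 - (s * s') ^ 2 := by rw [mul_pow]; nlinarith
  set A := (1 + s ^ 2) / (2 * (1 - s ^ 2)) + (1 + s' ^ 2) / (2 * (1 - s' ^ 2)) with hA_def
  have hA : A = (1 - (s * s') ^ 2) / ((1 - s ^ 2) * (1 - s' ^ 2)) := by
    rw [hA_def]; field_simp; ring
  have hA_pos : 0 < A := by rw [hA]; positivity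
  simp_rw [mehlerFactor_mul_mehlerFactor hs.ne hs'.ne a b]
  rw [integral_const_mul, integral_exp_neg_mul_sq_add_mul_add hA_pos, mehlerFactor, ← mul_assoc]
  congr 1
  · rw [← sqrt_inv, ← sqrt_inv, ← sqrt_inv, ← sqrt_mul (by positivity),
      ← sqrt_mul (by positivity), hA]
    congr 1
    field_simp
  · congr 1
    rw [hA]
    rw [mul_pow] at hss' ⊢
    field_simp
    ring

theorem exp_neg_sq_lt_one {t : ℝ} (ht : 0 < t) : exp (-t) ^ 2 < 1 :=
  pow_lt_one₀ (exp_pos _).le (exp_lt_one_iff.2 (neg_lt_zero.2 ht)) two_ne_zero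

theorem mehlerKernel_eq_prod_mehlerFactor (n : ℕ) {t : ℝ} (ht : 0 < t) (x y : Fin n → ℝ) :
    mehlerKernel n t x y = ∏ i, mehlerFactor (exp (-t)) (x i) (y i) := by
  have hexp : exp (-(2 * t)) = exp (-t) ^ 2 := by rw [← exp_nat_mul]; ring_nf
  have hs : 0 < 1 - exp (-t) ^ 2 := sub_pos.2 (exp_neg_sq_lt_one ht)
  simp only [mehlerFactor, Finset.prod_mul_distrib, Finset.prod_const, Finset.card_univ,
    Fintype.card_fin, ← exp_sum, mehlerKernel, hexp]
  congr 1
  · rw [← mul_rpow pi_pos.le hs.le, sqrt_eq_rpow, ← rpow_neg (by positivity),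
      ← rpow_mul_natCast (by positivity)]
    ring_nf
  · congr 1
    rw [← Finset.sum_div]
    simp only [Finset.sum_neg_distrib, Finset.sum_sub_distrib, ← Finset.sum_mul,
      ← Finset.mul_sum, ← Finset.sum_div, Finset.sum_add_distrib]

theorem mehlerKernel_semigroup_general (n : ℕ)
    (t t' : ℝ) (ht : 0 < t) (ht' : 0 < t') (x y : Fin n → ℝ) :
    ∫ z : Fin n → ℝ, mehlerKernel n t x z * mehlerKernel n t' z y
      = mehlerKernel n (t + t') x y := by
  simp_rw [mehlerKernel_eq_prod_mehlerFactor n ht, mehlerKernel_eq_prod_mehlerFactor n ht',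
    mehlerKernel_eq_prod_mehlerFactor n (add_pos ht ht'), ← Finset.prod_mul_distrib]
  rw [integral_fintype_prod_volume_eq_prod
    (fun i z => mehlerFactor _ (x i) z * mehlerFactor _ z (y i))]
  simp_rw [mehlerFactor_semigroup (exp_neg_sq_lt_one ht) (exp_neg_sq_lt_one ht'), ← exp_add,
    neg_add]

theorem mehlerKernel_semigroup (n : ℕ) (hn : 1 ≤ n)
    (t t' : ℝ) (ht : 0 < t) (ht' : 0 < t') (x y : Fin n → ℝ) :
    ∫ z : Fin n → ℝ, mehlerKernel n t x z * mehlerKernel n t' z y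
      = mehlerKernel n (t + t') x y :=
  mehlerKernel_semigroup_general n t t' ht ht' x y
end

section
/- Let R be a (not necessarily commutative) ring, let A, B ∈ R, set H = A + B, and define X : ℕ → R by X₀ = 1 and X_m = B·X_{m−1} + (A·X_{m−1} − X_{m−1}·A) for m ≥ 1. Then for every m, X_m = Σ_{j=0}^m (−1)^j · C(m,j) · H^{m−j} · A^j, where C(m,j) is the binomial coefficient. -/
lemma kantorovitz_central_pull {R : Type*} [Ring R] (j c : ℕ) (x y : R) :
    x * ((-1:R)^j * ((c:R) * y)) = (-1:R)^j * ((c:R) * (x * y)) := by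
  have h1 : Commute x ((-1:R)^j) := (Commute.neg_one_right x).pow_right j
  have h2 : Commute x (c:R) := (Nat.cast_commute c x).symm
  rw [← mul_assoc, h1.eq, mul_assoc, ← mul_assoc x, h2.eq, mul_assoc]

theorem kantorovitz_closed_form {R : Type*} [Ring R] (A B : R) (X : ℕ → R)
    (hX0 : X 0 = 1)
    (hX : ∀ m : ℕ, X (m + 1) = B * X m + (A * X m - X m * A)) :
    ∀ m : ℕ, X m = ∑ j ∈ Finset.range (m + 1),
      (-1 : R) ^ j * (m.choose j : R) * (A + B) ^ (m - j) * A ^ j := by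
  intro m
  induction m with
  | zero => simpa using hX0
  | succ m ih =>
    set S := ∑ j ∈ Finset.range (m + 1),
      (-1 : R) ^ j * (m.choose j : R) * (A + B) ^ (m - j) * A ^ j with hS
    have h1 : X (m+1) = (A+B) * S - S * A := by rw [hX m, ih]; noncomm_ring
    rw [h1, hS, Finset.mul_sum, Finset.sum_mul]
    have h2 : ∀ j ∈ Finset.range (m+1),
        (A+B) * ((-1 : R)^j * (m.choose j : R) * (A+B)^(m-j) * A^j)
        = (-1 : R)^j * (m.choose j : R) * (A+B)^(m+1-j) * A^j := by
      intro j hj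
      rw [Finset.mem_range] at hj
      rw [show m+1-j = (m-j)+1 by omega, pow_succ']
      simp only [mul_assoc]
      exact kantorovitz_central_pull j (m.choose j) (A+B) _
    rw [Finset.sum_congr rfl h2]
    rw [Finset.sum_range_succ' (fun j => (-1 : R)^j * (m.choose j : R) * (A+B)^(m+1-j) * A^j)]
    rw [Finset.sum_range_succ' (fun j => (-1 : R)^j * ((m+1).choose j : R) * (A+B)^(m+1-j) * A^j)]
    simp only [Nat.choose_zero_right, Nat.cast_one, pow_zero, Nat.choose_succ_succ,
      Nat.cast_add, Nat.sub_zero, mul_one, one_mul]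
    have h3 : ∀ j ∈ Finset.range (m+1),
        ((-1 : R)^j * (m.choose j : R) * (A+B)^(m-j) * A^j) * A
        = (-1 : R)^j * (m.choose j : R) * (A+B)^(m+1-(j+1)) * A^(j+1) := by
      intro j hj
      rw [show m+1-(j+1) = m-j by omega, pow_succ]
      simp only [mul_assoc]
    rw [Finset.sum_congr rfl h3]
    have h4 : ∑ j ∈ Finset.range m, (-1 : R)^(j+1) * (m.choose (j+1) : R) * (A+B)^(m+1-(j+1)) * A^(j+1)
        = ∑ j ∈ Finset.range (m+1), (-1 : R)^(j+1) * (m.choose (j+1) : R) * (A+B)^(m+1-(j+1)) * A^(j+1) := by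
      rw [Finset.sum_range_succ, Nat.choose_succ_self]
      simp
    rw [h4, add_sub_right_comm]
    congr 1
    rw [← Finset.sum_sub_distrib]
    apply Finset.sum_congr rfl
    intro j hj
    push_cast
    noncomm_ring
end

section
/- Let 𝒜 be a complete normed ring (a real Banach algebra with unit), let a, b ∈ 𝒜 and t ∈ ℝ. Define X : ℕ → 𝒜 by X₀ = 1 and X_m = b·X_{m−1} + (a·X_{m−1} − X_{m−1}·a) for m ≥ 1. Then the Kantorovitz series converges and represents the exponential of t(a+b): HasSum (fun m ↦ (t^m / m!) • (X_m · exp(t • a))) (exp(t • (a + b))). -/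
/-!
The recursion says `X m = D ^ m 1` for the operator `D x = (a + b) * x - x * a` on `𝒜`, i.e.
`D = L_(a+b) - R_a` with `L`, `R` left and right multiplication. Left and right multiplications
commute, and `exp` intertwines with both (they are continuous ring homomorphisms, from `𝒜` and
`𝒜ᵐᵒᵖ`), so `exp (t • D) = L_(exp (t • (a + b))) R_(exp (-t • a))`.
Evaluating the exponential series of `t • D` at `1` gives
`∑ t ^ m / m! • X m = exp (t • (a + b)) * exp (-t • a)`; multiply on the right by `exp (t • a)`.
-/

open NormedSpace ContinuousLinearMap

section

variable (𝕂 : Type*) {𝔸 : Type*} [NontriviallyNormedField 𝕂] [NormedRing 𝔸] [NormedAlgebra 𝕂 𝔸]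

namespace ContinuousLinearMap

variable (𝔸)

noncomputable def mulLeftRingHom : 𝔸 →+* 𝔸 →L[𝕂] 𝔸 where
  toFun := mul 𝕂 𝔸
  map_one' := by ext; simp
  map_mul' x y := by ext; simp [mul_assoc]
  map_zero' := map_zero _
  map_add' := map_add _

noncomputable def mulRightRingHom : 𝔸ᵐᵒᵖ →+* 𝔸 →L[𝕂] 𝔸 where
  toFun x := (mul 𝕂 𝔸).flip x.unop
  map_one' := by ext; simp
  map_mul' x y := by ext; simp [mul_assoc]
  map_zero' := by ext; simp
  map_add' x y := by ext; simp

variable {𝔸}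

theorem commute_mul_flip_mul (c d : 𝔸) : Commute (mul 𝕂 𝔸 c) ((mul 𝕂 𝔸).flip d) := by
  ext x; simp [mul_assoc]

end ContinuousLinearMap

variable [CharZero 𝕂] [ContinuousSMul ℚ 𝕂]

theorem mem_eball_expSeries_radius (x : 𝔸) : x ∈ Metric.eball 0 (expSeries 𝕂 𝔸).radius :=
  (expSeries_radius_eq_top 𝕂 𝔸).symm ▸ edist_lt_top _ _

variable [CompleteSpace 𝔸]

theorem exp_mul_eq_mul_exp (c : 𝔸) : exp (mul 𝕂 𝔸 c) = mul 𝕂 𝔸 (exp c) :=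
  (map_exp_of_mem_ball (mulLeftRingHom 𝕂 𝔸) (mul 𝕂 𝔸).continuous c
    (mem_eball_expSeries_radius 𝕂 c)).symm

theorem exp_flip_mul_eq_flip_mul_exp (c : 𝔸) :
    exp ((mul 𝕂 𝔸).flip c) = (mul 𝕂 𝔸).flip (exp c) := by
  simpa [mulRightRingHom] using (map_exp_of_mem_ball (mulRightRingHom 𝕂 𝔸)
    ((mul 𝕂 𝔸).flip.continuous.comp MulOpposite.continuous_unop) (MulOpposite.op c)
    (mem_eball_expSeries_radius 𝕂 _)).symm

theorem hasSum_smul_pow_apply_exp {E : Type*} [NormedAddCommGroup E] [NormedSpace 𝕂 E]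
    [CompleteSpace E] (T : E →L[𝕂] E) (t : 𝕂) (x : E) :
    HasSum (fun m : ℕ => (t ^ m / m.factorial : 𝕂) • (T ^ m) x) (exp (t • T) x) := by
  simpa [smul_pow, smul_smul, div_eq_inv_mul] using
    (exp_series_hasSum_exp' (𝕂 := 𝕂) (t • T)).mapL (apply 𝕂 E x)

end

section Kantorovitz

variable (𝕂 : Type*) {𝔸 : Type*} [NontriviallyNormedField 𝕂] [NormedRing 𝔸] [NormedAlgebra 𝕂 𝔸]

noncomputable def kantorovitzOp (a b : 𝔸) : 𝔸 →L[𝕂] 𝔸 := mul 𝕂 𝔸 (a + b) - (mul 𝕂 𝔸).flip a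

theorem kantorovitzOp_apply (a b x : 𝔸) :
    kantorovitzOp 𝕂 a b x = b * x + (a * x - x * a) := by
  simp [kantorovitzOp]; abel

theorem eq_kantorovitzOp_pow_apply_one {a b : 𝔸} {X : ℕ → 𝔸} (hX0 : X 0 = 1)
    (hX : ∀ m : ℕ, X (m + 1) = b * X m + (a * X m - X m * a)) (m : ℕ) :
    X m = (kantorovitzOp 𝕂 a b ^ m) 1 := by
  induction m with
  | zero => simp [hX0]
  | succ m ih => rw [hX, pow_succ', mul_apply_eq_comp, ← ih, kantorovitzOp_apply]

variable [CharZero 𝕂] [ContinuousSMul ℚ 𝕂] [CompleteSpace 𝔸]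

theorem exp_smul_kantorovitzOp (t : 𝕂) (a b : 𝔸) :
    exp (t • kantorovitzOp 𝕂 a b) =
      mul 𝕂 𝔸 (exp (t • (a + b))) * (mul 𝕂 𝔸).flip (exp (-(t • a))) := by
  rw [kantorovitzOp, smul_sub, ← map_smul, ← map_smul, sub_eq_add_neg, ← map_neg,
    exp_add_of_commute_of_mem_ball (commute_mul_flip_mul 𝕂 _ _) (mem_eball_expSeries_radius 𝕂 _)
      (mem_eball_expSeries_radius 𝕂 _), exp_mul_eq_mul_exp, exp_flip_mul_eq_flip_mul_exp]

end Kantorovitz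

theorem kantorovitz_series {𝒜 : Type*} [NormedRing 𝒜] [NormedAlgebra ℝ 𝒜]
    [CompleteSpace 𝒜] (a b : 𝒜) (t : ℝ) (X : ℕ → 𝒜)
    (hX0 : X 0 = 1)
    (hX : ∀ m : ℕ, X (m + 1) = b * X m + (a * X m - X m * a)) :
    HasSum (fun m : ℕ => (t ^ m / m.factorial : ℝ) • (X m * exp (t • a)))
      (exp (t • (a + b))) := by
  have hexp : exp (-(t • a)) * exp (t • a) = 1 := by
    rw [← exp_add_of_commute_of_mem_ball (Commute.refl (t • a)).neg_left
      (mem_eball_expSeries_radius ℝ _) (mem_eball_expSeries_radius ℝ _), neg_add_cancel, exp_zero]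
  have hsum := (hasSum_smul_pow_apply_exp ℝ (kantorovitzOp ℝ a b) t 1).mul_right (exp (t • a))
  rw [exp_smul_kantorovitzOp, mul_apply_eq_comp, flip_apply, mul_apply', mul_apply', one_mul,
    mul_assoc, hexp, mul_one] at hsum
  simpa only [eq_kantorovitzOp_pow_apply_one ℝ hX0 hX, smul_mul_assoc] using hsum
end

section
/- Let n ≥ 1, ℏ ∈ ℝ, and let V : ℝⁿ → ℝ be smooth. Define operators on smooth functions f : ℝⁿ → ℝ by A f = −(ℏ²/2)Δf + (|x|²/2 − nℏ/2)f, B f = ℏ² V f, X₂ f = B(Bf) + A(Bf) − B(Af), and X₃ f = B(X₂ f) + A(X₂ f) − X₂(A f). Then for every smooth f and every x ∈ ℝⁿ, X₃ f(x) = ℏ⁴ (x·∇V(x)) f(x) + ℏ⁶ [ Σ_{i,j} (∂²V/∂x_i∂x_j)(x) (∂²f/∂x_i∂x_j)(x) + Σ_i ∂_i(ΔV − (3/2)V²)(x) · ∂_i f(x) + ( (1/4)Δ²V(x) − (1/2)Δ(V²)(x) + V(x)³ − (1/2)V(x)ΔV(x) ) f(x) ]. -/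
/-- Partial derivative in the `i`-th coordinate of a function on `ℝⁿ`. -/
noncomputable def pderiv' {n : ℕ} (i : Fin n) (f : (Fin n → ℝ) → ℝ) :
    (Fin n → ℝ) → ℝ :=
  fun x => deriv (fun u => f (Function.update x i u)) (x i)

/-- The Laplacian `Δ = ∑ i ∂²/∂xᵢ²` on `ℝⁿ`. -/
noncomputable def laplacian' {n : ℕ} (f : (Fin n → ℝ) → ℝ) : (Fin n → ℝ) → ℝ :=
  fun x => ∑ i, pderiv' i (pderiv' i f) x

namespace Kant

variable {n : ℕ}

lemma update_eq (x : Fin n → ℝ) (i : Fin n) (u : ℝ) :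
    Function.update x i u = x + (u - x i) • (Pi.single i 1 : Fin n → ℝ) := by
  funext j
  by_cases h : j = i
  · subst h; simp
  · simp [Function.update_of_ne h, Pi.single_apply, h]

lemma hasDerivAt_update (x : Fin n → ℝ) (i : Fin n) (u : ℝ) :
    HasDerivAt (fun u => Function.update x i u) (Pi.single i 1 : Fin n → ℝ) u := by
  have : (fun u : ℝ => Function.update x i u)
      = fun u : ℝ => x + (u - x i) • (Pi.single i 1 : Fin n → ℝ) := by
    funext u; exact update_eq x i u
  rw [this]
  simpa using (((hasDerivAt_id u).sub_const (x i)).smul_const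
      (Pi.single i 1 : Fin n → ℝ)).const_add x

lemma diffAt_slice {f : (Fin n → ℝ) → ℝ} {x : Fin n → ℝ} {i : Fin n}
    (hf : DifferentiableAt ℝ f x) :
    DifferentiableAt ℝ (fun u => f (Function.update x i u)) (x i) := by
  have hx : Function.update x i (x i) = x := Function.update_eq_self i x
  have hf' : DifferentiableAt ℝ f (Function.update x i (x i)) := by rw [hx]; exact hf
  exact hf'.comp (x i) (hasDerivAt_update x i (x i)).differentiableAt

lemma pderiv'_eq_fderiv {f : (Fin n → ℝ) → ℝ} {x : Fin n → ℝ} {i : Fin n}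
    (hf : DifferentiableAt ℝ f x) :
    pderiv' i f x = fderiv ℝ f x (Pi.single i 1) := by
  have hx : Function.update x i (x i) = x := Function.update_eq_self i x
  have hf' : HasFDerivAt f (fderiv ℝ f x) (Function.update x i (x i)) := by
    rw [hx]; exact hf.hasFDerivAt
  have h2 := hf'.comp_hasDerivAt (x i) (hasDerivAt_update x i (x i))
  exact h2.deriv

lemma pderiv'_contDiff {f : (Fin n → ℝ) → ℝ} (hf : ContDiff ℝ (⊤ : ℕ∞) f) (i : Fin n) :
    ContDiff ℝ (⊤ : ℕ∞) (pderiv' i f) := by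
  have : pderiv' i f = fun x => fderiv ℝ f x (Pi.single i 1) := by
    funext x
    exact pderiv'_eq_fderiv (hf.differentiable (by simp) x)
  rw [this]
  exact (hf.fderiv_right (by simp)).clm_apply contDiff_const

lemma pderiv'_comm {f : (Fin n → ℝ) → ℝ} (hf : ContDiff ℝ (⊤ : ℕ∞) f) (i j : Fin n) :
    pderiv' i (pderiv' j f) = pderiv' j (pderiv' i f) := by
  funext x
  have hd : Differentiable ℝ f := hf.differentiable (by simp)
  have hfd : ContDiff ℝ (⊤ : ℕ∞) (fderiv ℝ f) := hf.fderiv_right (by simp)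
  have key : ∀ k l : Fin n, pderiv' k (pderiv' l f) x
      = fderiv ℝ (fderiv ℝ f) x (Pi.single k 1) (Pi.single l 1) := by
    intro k l
    have h1 : pderiv' l f = fun y => fderiv ℝ f y (Pi.single l 1) := by
      funext y; exact pderiv'_eq_fderiv (hd y)
    rw [h1, pderiv'_eq_fderiv (((hfd.differentiable (by simp)).clm_apply
      (differentiable_const _)) x)]
    rw [fderiv_clm_apply ((hfd.differentiable (by simp)) x) (differentiableAt_const _)]
    simp
  rw [key i j, key j i]
  exact (hf.contDiffAt.isSymmSndFDerivAt (by simp only [minSmoothness_of_isRCLikeNormedField]; exact WithTop.coe_le_coe.mpr le_top)).eq _ _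


section Alg
variable {f g : (Fin n → ℝ) → ℝ} {x : Fin n → ℝ} {i : Fin n}

lemma pderiv'_add (hf : DifferentiableAt ℝ f x) (hg : DifferentiableAt ℝ g x) :
    pderiv' i (fun y => f y + g y) x = pderiv' i f x + pderiv' i g x := by
  unfold pderiv'
  exact deriv_add (diffAt_slice hf) (diffAt_slice hg)

lemma pderiv'_sub (hf : DifferentiableAt ℝ f x) (hg : DifferentiableAt ℝ g x) :
    pderiv' i (fun y => f y - g y) x = pderiv' i f x - pderiv' i g x := by
  unfold pderiv'
  exact deriv_sub (diffAt_slice hf) (diffAt_slice hg)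

lemma pderiv'_mul (hf : DifferentiableAt ℝ f x) (hg : DifferentiableAt ℝ g x) :
    pderiv' i (fun y => f y * g y) x = pderiv' i f x * g x + f x * pderiv' i g x := by
  unfold pderiv'
  rw [deriv_fun_mul (diffAt_slice hf) (diffAt_slice hg), Function.update_eq_self]

lemma pderiv'_const_mul (c : ℝ) (hf : DifferentiableAt ℝ f x) :
    pderiv' i (fun y => c * f y) x = c * pderiv' i f x := by
  unfold pderiv'
  exact deriv_const_mul c (diffAt_slice hf)

lemma pderiv'_sq (hf : DifferentiableAt ℝ f x) :
    pderiv' i (fun y => f y ^ 2) x = 2 * f x * pderiv' i f x := by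
  have : (fun y => f y ^ 2) = fun y => f y * f y := by funext y; ring
  rw [this, pderiv'_mul hf hf]; ring

lemma pderiv'_sum {m : Type*} (s : Finset m) {F : m → (Fin n → ℝ) → ℝ}
    (hF : ∀ j ∈ s, DifferentiableAt ℝ (F j) x) :
    pderiv' i (fun y => ∑ j ∈ s, F j y) x = ∑ j ∈ s, pderiv' i (F j) x := by
  unfold pderiv'
  exact deriv_fun_sum (fun j hj => diffAt_slice (hF j hj))

lemma pderiv'_quad (c : ℝ) (x : Fin n → ℝ) (i : Fin n) :
    pderiv' i (fun y => (∑ j, y j ^ 2) / 2 - c) x = x i := by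
  unfold pderiv'
  have h : (fun u => (∑ j, (Function.update x i u) j ^ 2) / 2 - c)
      = fun u : ℝ => (u ^ 2 + ∑ j ∈ Finset.univ.erase i, x j ^ 2) / 2 - c := by
    funext u
    congr 1
    congr 1
    rw [← Finset.add_sum_erase _ _ (Finset.mem_univ i)]
    congr 1
    · simp
    · exact Finset.sum_congr rfl fun j hj => by
        rw [Function.update_of_ne (Finset.ne_of_mem_erase hj)]
  rw [h]
  have : HasDerivAt (fun u : ℝ => (u ^ 2 + ∑ j ∈ Finset.univ.erase i, x j ^ 2) / 2 - c)
      (x i) (x i) := by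
    have := (((hasDerivAt_pow 2 (x i)).add_const
      (∑ j ∈ Finset.univ.erase i, x j ^ 2)).div_const 2).sub_const c
    simpa using this.congr_deriv (by ring)
  exact this.deriv

end Alg

section Lap
variable {f g : (Fin n → ℝ) → ℝ}

lemma dAt (hf : ContDiff ℝ (⊤ : ℕ∞) f) (x : Fin n → ℝ) : DifferentiableAt ℝ f x :=
  (hf.differentiable (by simp)) x

lemma lap_contDiff (hf : ContDiff ℝ (⊤ : ℕ∞) f) : ContDiff ℝ (⊤ : ℕ∞) (laplacian' f) := by
  have : laplacian' f = fun x => ∑ i, pderiv' i (pderiv' i f) x := rfl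
  rw [this]
  exact ContDiff.sum fun i _ => pderiv'_contDiff (pderiv'_contDiff hf i) i

lemma lap_mul (hf : ContDiff ℝ (⊤ : ℕ∞) f) (hg : ContDiff ℝ (⊤ : ℕ∞) g) (x : Fin n → ℝ) :
    laplacian' (fun y => f y * g y) x
      = laplacian' f x * g x + 2 * (∑ i, pderiv' i f x * pderiv' i g x)
        + f x * laplacian' g x := by
  have hstep : ∀ i : Fin n, pderiv' i (pderiv' i fun y => f y * g y) x
      = pderiv' i (pderiv' i f) x * g x + 2 * (pderiv' i f x * pderiv' i g x)
        + f x * pderiv' i (pderiv' i g) x := by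
    intro i
    have h1 : pderiv' i (fun y => f y * g y)
        = fun y => pderiv' i f y * g y + f y * pderiv' i g y := by
      funext y; exact pderiv'_mul (dAt hf y) (dAt hg y)
    rw [h1, pderiv'_add (dAt ((pderiv'_contDiff hf i).mul hg) x)
        (dAt (hf.mul (pderiv'_contDiff hg i)) x),
      pderiv'_mul (dAt (pderiv'_contDiff hf i) x) (dAt hg x),
      pderiv'_mul (dAt hf x) (dAt (pderiv'_contDiff hg i) x)]
    ring
  unfold laplacian'
  rw [Finset.sum_congr rfl fun i _ => hstep i]
  rw [Finset.sum_add_distrib, Finset.sum_add_distrib, Finset.sum_mul,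
    ← Finset.mul_sum, ← Finset.mul_sum]

lemma lap_const_mul (c : ℝ) (hf : ContDiff ℝ (⊤ : ℕ∞) f) (x : Fin n → ℝ) :
    laplacian' (fun y => c * f y) x = c * laplacian' f x := by
  have hstep : ∀ i : Fin n, pderiv' i (pderiv' i fun y => c * f y) x
      = c * pderiv' i (pderiv' i f) x := by
    intro i
    have h1 : pderiv' i (fun y => c * f y) = fun y => c * pderiv' i f y := by
      funext y; exact pderiv'_const_mul c (dAt hf y)
    rw [h1, pderiv'_const_mul c (dAt (pderiv'_contDiff hf i) x)]
  unfold laplacian'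
  rw [Finset.sum_congr rfl fun i _ => hstep i, ← Finset.mul_sum]

lemma lap_sub (hf : ContDiff ℝ (⊤ : ℕ∞) f) (hg : ContDiff ℝ (⊤ : ℕ∞) g) (x : Fin n → ℝ) :
    laplacian' (fun y => f y - g y) x = laplacian' f x - laplacian' g x := by
  have hstep : ∀ i : Fin n, pderiv' i (pderiv' i fun y => f y - g y) x
      = pderiv' i (pderiv' i f) x - pderiv' i (pderiv' i g) x := by
    intro i
    have h1 : pderiv' i (fun y => f y - g y)
        = fun y => pderiv' i f y - pderiv' i g y := by
      funext y; exact pderiv'_sub (dAt hf y) (dAt hg y)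
    rw [h1, pderiv'_sub (dAt (pderiv'_contDiff hf i) x) (dAt (pderiv'_contDiff hg i) x)]
  unfold laplacian'
  rw [Finset.sum_congr rfl fun i _ => hstep i, Finset.sum_sub_distrib]

lemma lap_sum {m : Type*} (s : Finset m) {F : m → (Fin n → ℝ) → ℝ}
    (hF : ∀ j ∈ s, ContDiff ℝ (⊤ : ℕ∞) (F j)) (x : Fin n → ℝ) :
    laplacian' (fun y => ∑ j ∈ s, F j y) x = ∑ j ∈ s, laplacian' (F j) x := by
  have hstep : ∀ i : Fin n, pderiv' i (pderiv' i fun y => ∑ j ∈ s, F j y) x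
      = ∑ j ∈ s, pderiv' i (pderiv' i (F j)) x := by
    intro i
    have h1 : pderiv' i (fun y => ∑ j ∈ s, F j y)
        = fun y => ∑ j ∈ s, pderiv' i (F j) y := by
      funext y; exact pderiv'_sum s fun j hj => dAt (hF j hj) y
    rw [h1, pderiv'_sum s fun j hj => dAt (pderiv'_contDiff (hF j hj) i) x]
  unfold laplacian'
  rw [Finset.sum_congr rfl fun i _ => hstep i, Finset.sum_comm]

lemma lap_pderiv' (hf : ContDiff ℝ (⊤ : ℕ∞) f) (i : Fin n) (x : Fin n → ℝ) :
    laplacian' (pderiv' i f) x = pderiv' i (laplacian' f) x := by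
  have h : laplacian' f = fun y => ∑ j, pderiv' j (pderiv' j f) y := rfl
  rw [h, pderiv'_sum Finset.univ
    (fun j _ => dAt (pderiv'_contDiff (pderiv'_contDiff hf j) j) x)]
  unfold laplacian'
  refine Finset.sum_congr rfl fun j _ => ?_
  rw [← pderiv'_comm hf i j, pderiv'_comm (pderiv'_contDiff hf j) j i]

end Lap
end Kant

open Kant in
theorem third_kantorovitz_operator (n : ℕ) (hn : 1 ≤ n) (ℏ : ℝ)
    (V : (Fin n → ℝ) → ℝ) (hV : ContDiff ℝ (⊤ : ℕ∞) V)
    (A B X₂ X₃ : ((Fin n → ℝ) → ℝ) → ((Fin n → ℝ) → ℝ))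
    (hA : ∀ f x, A f x = -(ℏ ^ 2 / 2) * laplacian' f x
        + ((∑ i, x i ^ 2) / 2 - n * ℏ / 2) * f x)
    (hB : ∀ f x, B f x = ℏ ^ 2 * V x * f x)
    (hX₂ : ∀ f, X₂ f = fun x => B (B f) x + (A (B f) x - B (A f) x))
    (hX₃ : ∀ f, X₃ f = fun x => B (X₂ f) x + (A (X₂ f) x - X₂ (A f) x)) :
    ∀ f : (Fin n → ℝ) → ℝ, ContDiff ℝ (⊤ : ℕ∞) f → ∀ x,
      X₃ f x = ℏ ^ 4 * (∑ i, x i * pderiv' i V x) * f x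
        + ℏ ^ 6 * ((∑ i, ∑ j, pderiv' i (pderiv' j V) x * pderiv' i (pderiv' j f) x)
          + (∑ i, pderiv' i (fun y => laplacian' V y - (3 / 2) * (V y) ^ 2) x * pderiv' i f x)
          + ((1 / 4) * laplacian' (laplacian' V) x
              - (1 / 2) * laplacian' (fun y => (V y) ^ 2) x
              + (V x) ^ 3 - (1 / 2) * V x * laplacian' V x) * f x) := by
  have hLV : ContDiff ℝ (⊤ : ℕ∞) (laplacian' V) := lap_contDiff hV
  have hcoord : ∀ j : Fin n, ContDiff ℝ (⊤ : ℕ∞) (fun y : Fin n → ℝ => y j) :=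
    fun j => contDiff_pi.mp contDiff_id j
  have hW : ContDiff ℝ (⊤ : ℕ∞) (fun y : Fin n → ℝ => (∑ k, y k ^ 2) / 2 - ↑n * ℏ / 2) :=
    ((ContDiff.sum fun j _ => (hcoord j).pow 2).div_const 2).sub contDiff_const
  have hX2fun : ∀ g, ContDiff ℝ (⊤ : ℕ∞) g → X₂ g
      = fun y => ℏ ^ 4 * (V y ^ 2 * g y - 1 / 2 * laplacian' V y * g y - ∑ i, pderiv' i V y * pderiv' i g y) := by
    intro g hg
    rw [hX₂ g]
    funext y
    have hBg : B g = fun z => ℏ ^ 2 * V z * g z := funext fun z => hB g z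
    have hL : laplacian' (B g) y = ℏ ^ 2 * (laplacian' V y * g y
        + 2 * (∑ i, pderiv' i V y * pderiv' i g y) + V y * laplacian' g y) := by
      rw [hBg]
      have h0 : (fun z => ℏ ^ 2 * V z * g z) = fun z => ℏ ^ 2 * (V z * g z) := by
        funext z; ring
      have h1 : laplacian' (fun z => ℏ ^ 2 * (V z * g z)) y
          = ℏ ^ 2 * laplacian' (fun z => V z * g z) y := lap_const_mul _ (hV.mul hg) y
      rw [h0, h1, lap_mul hV hg y]
    simp only [hB, hA]
    rw [hL]
    ring
  intro f hf x
  have hLf : ContDiff ℝ (⊤ : ℕ∞) (laplacian' f) := lap_contDiff hf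
  have hAfeq : A f = fun y => -(ℏ ^ 2 / 2) * laplacian' f y
      + ((∑ k, y k ^ 2) / 2 - ↑n * ℏ / 2) * f y := funext fun y => hA f y
  have hAfs : ContDiff ℝ (⊤ : ℕ∞) (A f) := by
    rw [hAfeq]; exact (contDiff_const.mul hLf).add (hW.mul hf)
  have hGs : ContDiff ℝ (⊤ : ℕ∞) (fun y => V y ^ 2 * f y - 1 / 2 * laplacian' V y * f y - ∑ i, pderiv' i V y * pderiv' i f y) :=
    (((hV.pow 2).mul hf).sub ((contDiff_const.mul hLV).mul hf)).sub
      (ContDiff.sum fun i _ => (pderiv'_contDiff hV i).mul (pderiv'_contDiff hf i))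
  have hG3s : ContDiff ℝ (⊤ : ℕ∞) (fun y => ∑ i, pderiv' i V y * pderiv' i f y) :=
    ContDiff.sum fun i _ => (pderiv'_contDiff hV i).mul (pderiv'_contDiff hf i)
  have hg2 : X₂ f = fun y => ℏ ^ 4 * (V y ^ 2 * f y - 1 / 2 * laplacian' V y * f y - ∑ i, pderiv' i V y * pderiv' i f y) := hX2fun f hf
  have eX2fx : X₂ f x = ℏ ^ 4 * (V x ^ 2 * f x - 1 / 2 * laplacian' V x * f x - (∑ i, pderiv' i V x * pderiv' i f x)) :=
    congrFun hg2 x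
  have e2 : laplacian' (X₂ f) x = ℏ ^ 4 * laplacian' (fun y => V y ^ 2 * f y - 1 / 2 * laplacian' V y * f y - ∑ i, pderiv' i V y * pderiv' i f y) x := by
    rw [hg2]; exact lap_const_mul _ hGs x
  -- Laplacian of the three pieces
  have eG1' : laplacian' (fun y => V y ^ 2 * f y) x
      = laplacian' (fun y => V y ^ 2) x * f x
        + 2 * (∑ i, pderiv' i (fun y => V y ^ 2) x * pderiv' i f x)
        + V x ^ 2 * laplacian' f x := lap_mul (hV.pow 2) hf x
  have hS1' : ∑ i, pderiv' i (fun y => V y ^ 2) x * pderiv' i f x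
      = 2 * V x * (∑ i, pderiv' i V x * pderiv' i f x) := by
    calc ∑ i, pderiv' i (fun y => V y ^ 2) x * pderiv' i f x
        = ∑ i, 2 * V x * (pderiv' i V x * pderiv' i f x) :=
          Finset.sum_congr rfl fun i _ => by rw [pderiv'_sq (dAt hV x)]; ring
      _ = 2 * V x * (∑ i, pderiv' i V x * pderiv' i f x) := by rw [← Finset.mul_sum]
  have eG2a : laplacian' (fun y => 1 / 2 * laplacian' V y) x
      = 1 / 2 * laplacian' (laplacian' V) x := lap_const_mul _ hLV x
  have eG2b : ∑ i, pderiv' i (fun y => 1 / 2 * laplacian' V y) x * pderiv' i f x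
      = 1 / 2 * (∑ i, pderiv' i (laplacian' V) x * pderiv' i f x) := by
    calc ∑ i, pderiv' i (fun y => 1 / 2 * laplacian' V y) x * pderiv' i f x
        = ∑ i, 1 / 2 * (pderiv' i (laplacian' V) x * pderiv' i f x) :=
          Finset.sum_congr rfl fun i _ => by
            rw [pderiv'_const_mul (1/2 : ℝ) (dAt hLV x)]; ring
      _ = _ := by rw [← Finset.mul_sum]
  have eG2' : laplacian' (fun y => 1 / 2 * laplacian' V y * f y) x
      = laplacian' (fun y => 1 / 2 * laplacian' V y) x * f x
        + 2 * (∑ i, pderiv' i (fun y => 1 / 2 * laplacian' V y) x * pderiv' i f x)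
        + 1 / 2 * laplacian' V x * laplacian' f x :=
    lap_mul (contDiff_const.mul hLV) hf x
  have eG2 : laplacian' (fun y => 1 / 2 * laplacian' V y * f y) x
      = 1 / 2 * laplacian' (laplacian' V) x * f x + 2 * (1 / 2 * (∑ i, pderiv' i (laplacian' V) x * pderiv' i f x))
        + 1 / 2 * laplacian' V x * laplacian' f x := by
    rw [eG2', eG2a, eG2b]
  have eG3' : laplacian' (fun y => ∑ i, pderiv' i V y * pderiv' i f y) x
      = ∑ i, laplacian' (fun y => pderiv' i V y * pderiv' i f y) x :=
    lap_sum Finset.univ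
      (fun i _ => (pderiv'_contDiff hV i).mul (pderiv'_contDiff hf i)) x
  have eG3 : laplacian' (fun y => ∑ i, pderiv' i V y * pderiv' i f y) x
      = (∑ i, pderiv' i (laplacian' V) x * pderiv' i f x) + 2 * (∑ i, ∑ j, pderiv' i (pderiv' j V) x * pderiv' i (pderiv' j f) x) + (∑ i, pderiv' i V x * pderiv' i (laplacian' f) x) := by
    rw [eG3']
    calc ∑ i, laplacian' (fun y => pderiv' i V y * pderiv' i f y) x
        = ∑ i : Fin n, (pderiv' i (laplacian' V) x * pderiv' i f x
            + 2 * (∑ j, pderiv' j (pderiv' i V) x * pderiv' j (pderiv' i f) x)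
            + pderiv' i V x * pderiv' i (laplacian' f) x) :=
          Finset.sum_congr rfl fun i _ => by
            have h' : laplacian' (fun y => pderiv' i V y * pderiv' i f y) x
                = laplacian' (pderiv' i V) x * pderiv' i f x
                  + 2 * (∑ j, pderiv' j (pderiv' i V) x * pderiv' j (pderiv' i f) x)
                  + pderiv' i V x * laplacian' (pderiv' i f) x :=
              lap_mul (pderiv'_contDiff hV i) (pderiv'_contDiff hf i) x
            rw [h', lap_pderiv' hV i x, lap_pderiv' hf i x]
      _ = (∑ i, pderiv' i (laplacian' V) x * pderiv' i f x) + 2 * (∑ i, ∑ j, pderiv' i (pderiv' j V) x * pderiv' i (pderiv' j f) x) + (∑ i, pderiv' i V x * pderiv' i (laplacian' f) x) := by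
          rw [Finset.sum_add_distrib, Finset.sum_add_distrib, ← Finset.mul_sum,
            Finset.sum_comm]
  have eLapG : laplacian' (fun y => V y ^ 2 * f y - 1 / 2 * laplacian' V y * f y - ∑ i, pderiv' i V y * pderiv' i f y) x
      = (laplacian' (fun y => V y ^ 2) x * f x + 2 * (2 * V x * (∑ i, pderiv' i V x * pderiv' i f x))
          + V x ^ 2 * laplacian' f x)
        - (1 / 2 * laplacian' (laplacian' V) x * f x + 2 * (1 / 2 * (∑ i, pderiv' i (laplacian' V) x * pderiv' i f x))
          + 1 / 2 * laplacian' V x * laplacian' f x)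
        - ((∑ i, pderiv' i (laplacian' V) x * pderiv' i f x) + 2 * (∑ i, ∑ j, pderiv' i (pderiv' j V) x * pderiv' i (pderiv' j f) x) + (∑ i, pderiv' i V x * pderiv' i (laplacian' f) x)) := by
    have h1 : laplacian' (fun y => V y ^ 2 * f y - 1 / 2 * laplacian' V y * f y - ∑ i, pderiv' i V y * pderiv' i f y) x
        = laplacian' (fun y => V y ^ 2 * f y - 1 / 2 * laplacian' V y * f y) x
          - laplacian' (fun y => ∑ i, pderiv' i V y * pderiv' i f y) x :=
      lap_sub (((hV.pow 2).mul hf).sub ((contDiff_const.mul hLV).mul hf)) hG3s x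
    have h2 : laplacian' (fun y => V y ^ 2 * f y - 1 / 2 * laplacian' V y * f y) x
        = laplacian' (fun y => V y ^ 2 * f y) x
          - laplacian' (fun y => 1 / 2 * laplacian' V y * f y) x :=
      lap_sub ((hV.pow 2).mul hf) ((contDiff_const.mul hLV).mul hf) x
    rw [h1, h2, eG1', hS1', eG2, eG3]
  have e1 : B (X₂ f) x = ℏ ^ 2 * V x
      * (ℏ ^ 4 * (V x ^ 2 * f x - 1 / 2 * laplacian' V x * f x - (∑ i, pderiv' i V x * pderiv' i f x))) := by
    rw [hB, eX2fx]
  have e3 : A (X₂ f) x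
      = -(ℏ ^ 2 / 2) * (ℏ ^ 4 * ((laplacian' (fun y => V y ^ 2) x * f x
          + 2 * (2 * V x * (∑ i, pderiv' i V x * pderiv' i f x)) + V x ^ 2 * laplacian' f x)
        - (1 / 2 * laplacian' (laplacian' V) x * f x + 2 * (1 / 2 * (∑ i, pderiv' i (laplacian' V) x * pderiv' i f x))
          + 1 / 2 * laplacian' V x * laplacian' f x)
        - ((∑ i, pderiv' i (laplacian' V) x * pderiv' i f x) + 2 * (∑ i, ∑ j, pderiv' i (pderiv' j V) x * pderiv' i (pderiv' j f) x) + (∑ i, pderiv' i V x * pderiv' i (laplacian' f) x))))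
        + ((∑ i, x i ^ 2) / 2 - ↑n * ℏ / 2)
          * (ℏ ^ 4 * (V x ^ 2 * f x - 1 / 2 * laplacian' V x * f x - (∑ i, pderiv' i V x * pderiv' i f x))) := by
    rw [hA, e2, eLapG, eX2fx]
  have e6 : ∀ i : Fin n, pderiv' i (A f) x
      = -(ℏ ^ 2 / 2) * pderiv' i (laplacian' f) x
        + (x i * f x + ((∑ k, x k ^ 2) / 2 - ↑n * ℏ / 2) * pderiv' i f x) := by
    intro i
    rw [hAfeq]
    have h1 : pderiv' i (fun y => -(ℏ ^ 2 / 2) * laplacian' f y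
          + ((∑ k, y k ^ 2) / 2 - ↑n * ℏ / 2) * f y) x
        = pderiv' i (fun y => -(ℏ ^ 2 / 2) * laplacian' f y) x
          + pderiv' i (fun y => ((∑ k, y k ^ 2) / 2 - ↑n * ℏ / 2) * f y) x :=
      pderiv'_add (dAt (contDiff_const.mul hLf) x) (dAt (hW.mul hf) x)
    have h2 : pderiv' i (fun y => -(ℏ ^ 2 / 2) * laplacian' f y) x
        = -(ℏ ^ 2 / 2) * pderiv' i (laplacian' f) x :=
      pderiv'_const_mul _ (dAt hLf x)
    have h3 : pderiv' i (fun y => ((∑ k, y k ^ 2) / 2 - ↑n * ℏ / 2) * f y) x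
        = pderiv' i (fun y => (∑ k, y k ^ 2) / 2 - ↑n * ℏ / 2) x * f x
          + ((∑ k, x k ^ 2) / 2 - ↑n * ℏ / 2) * pderiv' i f x := pderiv'_mul (dAt hW x) (dAt hf x)
    have h4 : pderiv' i (fun y => (∑ k, y k ^ 2) / 2 - ↑n * ℏ / 2) x = x i :=
      pderiv'_quad _ x i
    rw [h1, h2, h3, h4]
  have e7 : ∑ i, pderiv' i V x * pderiv' i (A f) x
      = -(ℏ ^ 2 / 2) * (∑ i, pderiv' i V x * pderiv' i (laplacian' f) x)
        + ((∑ i, x i * pderiv' i V x) * f x + ((∑ k, x k ^ 2) / 2 - ↑n * ℏ / 2) * (∑ i, pderiv' i V x * pderiv' i f x)) := by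
    calc ∑ i, pderiv' i V x * pderiv' i (A f) x
        = ∑ i, (-(ℏ ^ 2 / 2) * (pderiv' i V x * pderiv' i (laplacian' f) x)
            + (x i * pderiv' i V x * f x
              + ((∑ k, x k ^ 2) / 2 - ↑n * ℏ / 2) * (pderiv' i V x * pderiv' i f x))) :=
          Finset.sum_congr rfl fun i _ => by rw [e6 i]; ring
      _ = _ := by
          rw [Finset.sum_add_distrib, ← Finset.mul_sum, Finset.sum_add_distrib,
            ← Finset.mul_sum, ← Finset.sum_mul]
  have e5 : A f x = -(ℏ ^ 2 / 2) * laplacian' f x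
      + ((∑ i, x i ^ 2) / 2 - ↑n * ℏ / 2) * f x := hA f x
  have e4 : X₂ (A f) x = ℏ ^ 4 * (V x ^ 2 * A f x - 1 / 2 * laplacian' V x * A f x
      - ∑ i, pderiv' i V x * pderiv' i (A f) x) := congrFun (hX2fun (A f) hAfs) x
  have e4' : X₂ (A f) x = ℏ ^ 4 * (V x ^ 2 * (-(ℏ ^ 2 / 2) * laplacian' f x
        + ((∑ i, x i ^ 2) / 2 - ↑n * ℏ / 2) * f x)
      - 1 / 2 * laplacian' V x * (-(ℏ ^ 2 / 2) * laplacian' f x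
        + ((∑ i, x i ^ 2) / 2 - ↑n * ℏ / 2) * f x)
      - (-(ℏ ^ 2 / 2) * (∑ i, pderiv' i V x * pderiv' i (laplacian' f) x)
        + ((∑ i, x i * pderiv' i V x) * f x + ((∑ k, x k ^ 2) / 2 - ↑n * ℏ / 2) * (∑ i, pderiv' i V x * pderiv' i f x)))) := by
    rw [e4, e5, e7]
  have e8 : ∀ i : Fin n, pderiv' i (fun y => laplacian' V y - 3 / 2 * (V y) ^ 2) x
      = pderiv' i (laplacian' V) x - 3 / 2 * (2 * V x * pderiv' i V x) := by
    intro i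
    have h1 : pderiv' i (fun y => laplacian' V y - 3 / 2 * (V y) ^ 2) x
        = pderiv' i (laplacian' V) x - pderiv' i (fun y => 3 / 2 * (V y) ^ 2) x :=
      pderiv'_sub (dAt hLV x) (dAt (contDiff_const.mul (hV.pow 2)) x)
    have h2 : pderiv' i (fun y => 3 / 2 * (V y) ^ 2) x
        = 3 / 2 * pderiv' i (fun y => (V y) ^ 2) x :=
      pderiv'_const_mul _ (dAt (hV.pow 2) x)
    have h3 : pderiv' i (fun y => (V y) ^ 2) x = 2 * V x * pderiv' i V x :=
      pderiv'_sq (dAt hV x)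
    rw [h1, h2, h3]
  have e9 : ∑ i, pderiv' i (fun y => laplacian' V y - 3 / 2 * (V y) ^ 2) x
        * pderiv' i f x = (∑ i, pderiv' i (laplacian' V) x * pderiv' i f x) - 3 * V x * (∑ i, pderiv' i V x * pderiv' i f x) := by
    calc ∑ i, pderiv' i (fun y => laplacian' V y - 3 / 2 * (V y) ^ 2) x * pderiv' i f x
        = ∑ i, (pderiv' i (laplacian' V) x * pderiv' i f x
            - 3 * V x * (pderiv' i V x * pderiv' i f x)) :=
          Finset.sum_congr rfl fun i _ => by rw [e8 i]; ring
      _ = _ := by rw [Finset.sum_sub_distrib, ← Finset.mul_sum]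
  simp only [hX₃]
  rw [e1, e3, e4', e9]
  ring
end
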